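/- Let (L₁, α_{L₁}) →^f (L₂, α_{L₂}) →^g (L₃, α_{L₃}) be a short exact sequence of hom-Lie-Rinehart algebras over (A, φ) (f injective, g surjective, Ker(g) = Im(f)) and let (M, α_M) be a hom-Lie-Rinehart algebra over (A, φ) such that, for each i ∈ {1,2,3}, (M, α_M) and (Lᵢ, α_{Lᵢ}) have compatible quasi hom-actions on each other, and f and g preserve these actions: f(ᵖx) = ᵖ(f(x)), ˣp = ^(f(x))p, g(ᵖs) = ᵖ(g(s)), and ˢp = ^(g(s))p for x ∈ L₁, s ∈ L₂, p ∈ M. Then the sequence (L₁ ∗ M, α_{L₁∗M}) →^{f∗Id_M} (L₂ ∗ M, α_{L₂∗M}) →^{g∗Id_M} (L₃ ∗ M, α_{L₃∗M}) is exact (Im(f∗Id_M) = Ker(g∗Id_M)) and g∗Id_M is surjective, where f∗Id_M and g∗Id_M send x∗m to f(x)∗m and s∗m to g(s)∗m respectively. -/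

import Mathlib

open TensorProduct Function Set

/-- A hom-Lie-Rinehart algebra structure over `(A, φ)` on the `A`-module `L`. -/
structure HLR (R A : Type) [CommRing R] [CommRing A] [Algebra R A]
    (φ : A →ₐ[R] A) (L : Type) [AddCommGroup L] [Module R L]
    [Module A L] [IsScalarTower R A L] : Type where
  bracket : L → L → L
  add_left : ∀ x y z, bracket (x + y) z = bracket x z + bracket y z
  add_right : ∀ x y z, bracket x (y + z) = bracket x y + bracket x z
  smul_left : ∀ (r : R) (x y : L), bracket (r • x) y = r • bracket x y
  smul_right : ∀ (r : R) (x y : L), bracket x (r • y) = r • bracket x y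
  skew : ∀ x y, bracket x y = - bracket y x
  alpha : L → L
  alpha_add : ∀ x y, alpha (x + y) = alpha x + alpha y
  alpha_smulR : ∀ (r : R) (x : L), alpha (r • x) = r • alpha x
  rho : L → A → A
  rho_add_left : ∀ x y a, rho (x + y) a = rho x a + rho y a
  rho_smulR_left : ∀ (r : R) (x : L) (a : A), rho (r • x) a = r • rho x a
  rho_add_right : ∀ (x : L) (a b : A), rho x (a + b) = rho x a + rho x b
  rho_smulR_right : ∀ (x : L) (r : R) (a : A), rho x (r • a) = r • rho x a
  rho_deriv : ∀ (x : L) (a b : A), rho x (a * b) = φ a * rho x b + φ b * rho x a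
  alpha_bracket : ∀ x y, alpha (bracket x y) = bracket (alpha x) (alpha y)
  hom_jacobi : ∀ x y z, bracket (alpha x) (bracket y z)
      + bracket (alpha y) (bracket z x) + bracket (alpha z) (bracket x y) = 0
  alpha_smulA : ∀ (a : A) (x : L), alpha (a • x) = φ a • alpha x
  rho_alpha : ∀ (x : L) (a : A), rho (alpha x) (φ a) = φ (rho x a)
  rho_bracket : ∀ (x y : L) (a : A), rho (bracket x y) (φ a)
      = rho (alpha x) (rho y a) - rho (alpha y) (rho x a)
  rho_smulA : ∀ (a : A) (x : L) (b : A), rho (a • x) b = φ a * rho x b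
  leibniz : ∀ (x : L) (a : A) (y : L),
      bracket x (a • y) = φ a • bracket x y + rho x a • alpha y

section Defs

variable {R A : Type} [CommRing R] [CommRing A] [Algebra R A] {φ : A →ₐ[R] A}

/-- Homomorphism of hom-Lie-Rinehart algebras over `(A, φ)`: an `A`-linear map
preserving brackets, the twist maps and the anchors. -/
def IsHLRHom {K L : Type}
    [AddCommGroup K] [Module R K] [Module A K] [IsScalarTower R A K]
    [AddCommGroup L] [Module R L] [Module A L] [IsScalarTower R A L]
    (SK : HLR R A φ K) (SL : HLR R A φ L) (f : K → L) : Prop :=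
  (∀ x y, f (x + y) = f x + f y) ∧
  (∀ (a : A) (x : K), f (a • x) = a • f x) ∧
  (∀ x y, f (SK.bracket x y) = SL.bracket (f x) (f y)) ∧
  (∀ x, f (SK.alpha x) = SL.alpha (f x)) ∧
  (∀ (x : K) (a : A), SL.rho (f x) a = SK.rho x a)

/-- The center `Z_A(L)` of a hom-Lie-Rinehart algebra. -/
def HLR.center {L : Type}
    [AddCommGroup L] [Module R L] [Module A L] [IsScalarTower R A L]
    (S : HLR R A φ L) : Set L :=
  {x | ∀ (a : A) (z : L),
    S.bracket (a • x) z = 0 ∧ S.bracket (a • S.alpha x) z = 0 ∧ S.rho x a = 0}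

/-- `(M, i) → (K, σ)` is a central extension of `L`. -/
def IsCentralExt {M K L : Type}
    [AddCommGroup M] [Module R M] [Module A M] [IsScalarTower R A M]
    [AddCommGroup K] [Module R K] [Module A K] [IsScalarTower R A K]
    [AddCommGroup L] [Module R L] [Module A L] [IsScalarTower R A L]
    (SM : HLR R A φ M) (SK : HLR R A φ K) (SL : HLR R A φ L)
    (i : M → K) (σ : K → L) : Prop :=
  IsHLRHom SM SK i ∧ IsHLRHom SK SL σ ∧ Function.Injective i ∧
  Function.Surjective σ ∧ Set.range i = {k | σ k = 0} ∧
  {k | σ k = 0} ⊆ SK.center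

/-- `(M, i) → (K, σ)` is an `α`-central extension of `L`. -/
def IsAlphaCentralExt {M K L : Type}
    [AddCommGroup M] [Module R M] [Module A M] [IsScalarTower R A M]
    [AddCommGroup K] [Module R K] [Module A K] [IsScalarTower R A K]
    [AddCommGroup L] [Module R L] [Module A L] [IsScalarTower R A L]
    (SM : HLR R A φ M) (SK : HLR R A φ K) (SL : HLR R A φ L)
    (i : M → K) (σ : K → L) : Prop :=
  IsHLRHom SM SK i ∧ IsHLRHom SK SL σ ∧ Function.Injective i ∧
  Function.Surjective σ ∧ Set.range i = {k | σ k = 0} ∧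
  (∀ m : M, i (SM.alpha m) ∈ SK.center)

/-- A hom-Lie-Rinehart algebra is perfect if `L = {L, L}`, the `A`-submodule
generated by all brackets. -/
def HLR.IsPerfect {L : Type}
    [AddCommGroup L] [Module R L] [Module A L] [IsScalarTower R A L]
    (S : HLR R A φ L) : Prop :=
  Submodule.span A {z : L | ∃ x y, z = S.bracket x y} = ⊤

/-- A hom-Lie-Rinehart algebra is `α`-perfect if `L = {α_L(L), α_L(L)}`. -/
def HLR.IsAlphaPerfect {L : Type}
    [AddCommGroup L] [Module R L] [Module A L] [IsScalarTower R A L]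
    (S : HLR R A φ L) : Prop :=
  Submodule.span A {z : L | ∃ x y, z = S.bracket (S.alpha x) (S.alpha y)} = ⊤

/-- Universal central extension. -/
def IsUniversalCentralExt {M K L : Type}
    [AddCommGroup M] [Module R M] [Module A M] [IsScalarTower R A M]
    [AddCommGroup K] [Module R K] [Module A K] [IsScalarTower R A K]
    [AddCommGroup L] [Module R L] [Module A L] [IsScalarTower R A L]
    (SM : HLR R A φ M) (SK : HLR R A φ K) (SL : HLR R A φ L)
    (i : M → K) (σ : K → L) : Prop :=
  IsCentralExt SM SK SL i σ ∧
  ∀ (M' L' : Type)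
    [AddCommGroup M'] [Module R M'] [Module A M'] [IsScalarTower R A M']
    [AddCommGroup L'] [Module R L'] [Module A L'] [IsScalarTower R A L']
    (SM' : HLR R A φ M') (SL' : HLR R A φ L') (j : M' → L') (τ : L' → L),
    IsCentralExt SM' SL' SL j τ →
    ∃! h : K → L', IsHLRHom SK SL' h ∧ ∀ x, τ (h x) = σ x

/-- Universal `α`-central extension. -/
def IsUniversalAlphaCentralExt {M K L : Type}
    [AddCommGroup M] [Module R M] [Module A M] [IsScalarTower R A M]
    [AddCommGroup K] [Module R K] [Module A K] [IsScalarTower R A K]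
    [AddCommGroup L] [Module R L] [Module A L] [IsScalarTower R A L]
    (SM : HLR R A φ M) (SK : HLR R A φ K) (SL : HLR R A φ L)
    (i : M → K) (σ : K → L) : Prop :=
  IsCentralExt SM SK SL i σ ∧
  ∀ (M' L' : Type)
    [AddCommGroup M'] [Module R M'] [Module A M'] [IsScalarTower R A M']
    [AddCommGroup L'] [Module R L'] [Module A L'] [IsScalarTower R A L']
    (SM' : HLR R A φ M') (SL' : HLR R A φ L') (j : M' → L') (τ : L' → L),
    IsAlphaCentralExt SM' SL' SL j τ →
    ∃! h : K → L', IsHLRHom SK SL' h ∧ ∀ x, τ (h x) = σ x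

end Defs

section UceDefs

variable {R A : Type} [CommRing R] [CommRing A] [Algebra R A] (φ : A →ₐ[R] A)
variable {L : Type} [AddCommGroup L] [Module R L] [Module A L] [IsScalarTower R A L]

/-- The `A`-submodule `M^φ_A L` of `A ⊗ L ⊗ L` of defining relations of `uce^φ_A L`. -/
def uceRel (S : HLR R A φ L) : Submodule A (A ⊗[R] (L ⊗[R] L)) :=
  Submodule.span A
    ({t | ∃ (a : A) (x : L), t = a ⊗ₜ[R] (x ⊗ₜ[R] x)} ∪
     {t | ∃ (a : A) (x y : L), t = a ⊗ₜ[R] (x ⊗ₜ[R] y) + a ⊗ₜ[R] (y ⊗ₜ[R] x)} ∪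
     {t | ∃ (a : A) (x y z : L), t =
        a ⊗ₜ[R] (S.alpha x ⊗ₜ[R] S.bracket y z)
          + a ⊗ₜ[R] (S.alpha y ⊗ₜ[R] S.bracket z x)
          + a ⊗ₜ[R] (S.alpha z ⊗ₜ[R] S.bracket x y)} ∪
     {t | ∃ (a : A) (x y x' y' : L), t =
        φ a ⊗ₜ[R] (S.bracket x y ⊗ₜ[R] S.bracket x' y')
          + S.rho (S.bracket x y) a ⊗ₜ[R] (S.alpha x' ⊗ₜ[R] S.alpha y')
          - (1 : A) ⊗ₜ[R] (S.bracket x y ⊗ₜ[R] (a • S.bracket x' y'))})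

/-- The underlying `A`-module of `uce^φ_A L`. -/
abbrev UCE (S : HLR R A φ L) : Type := (A ⊗[R] (L ⊗[R] L)) ⧸ uceRel φ S

/-- The coset `(a, x, y)` in `uce^φ_A L`. -/
noncomputable def uceMk (S : HLR R A φ L) (a : A) (x y : L) : UCE φ S :=
  Submodule.Quotient.mk (a ⊗ₜ[R] (x ⊗ₜ[R] y))

/-- `U` is the hom-Lie-Rinehart structure of `uce^φ_A L`: its bracket, twist map and anchor
are given by the defining formulas on cosets. -/
def IsUceStructure (S : HLR R A φ L) (U : HLR R A φ (UCE φ S)) : Prop :=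
  (∀ (a₁ a₂ : A) (x₁ y₁ x₂ y₂ : L),
    U.bracket (uceMk φ S a₁ x₁ y₁) (uceMk φ S a₂ x₂ y₂) =
      uceMk φ S (φ (a₁ * a₂)) (S.bracket x₁ y₁) (S.bracket x₂ y₂)
      + uceMk φ S (φ a₁ * S.rho (S.bracket x₁ y₁) a₂) (S.alpha x₂) (S.alpha y₂)
      - uceMk φ S (φ a₂ * S.rho (S.bracket x₂ y₂) a₁) (S.alpha x₁) (S.alpha y₁)) ∧
  (∀ (a : A) (x y : L),
    U.alpha (uceMk φ S a x y) = uceMk φ S (φ a) (S.alpha x) (S.alpha y)) ∧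
  (∀ (a b : A) (x y : L),
    U.rho (uceMk φ S a x y) b = φ a * S.rho (S.bracket x y) b)

/-- `u` is the canonical map `u_L : uce^φ_A L → L`, `(a,x,y) ↦ a • [x,y]`. -/
def IsUceMap (S : HLR R A φ L) (u : UCE φ S → L) : Prop :=
  (∀ ξ η, u (ξ + η) = u ξ + u η) ∧
  (∀ (a : A) (ξ : UCE φ S), u (a • ξ) = a • u ξ) ∧
  (∀ (a : A) (x y : L), u (uceMk φ S a x y) = a • S.bracket x y)

end UceDefs

section MoreDefs

variable {R A : Type} [CommRing R] [CommRing A] [Algebra R A] (φ : A →ₐ[R] A)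

/-- `F` is the homomorphism `uce^φ_A(f)` induced by `f` on universal central extensions. -/
def IsUceFunctorMap {K L : Type}
    [AddCommGroup K] [Module R K] [Module A K] [IsScalarTower R A K]
    [AddCommGroup L] [Module R L] [Module A L] [IsScalarTower R A L]
    (SK : HLR R A φ K) (SL : HLR R A φ L)
    (UK : HLR R A φ (UCE φ SK)) (UL : HLR R A φ (UCE φ SL))
    (f : K → L) (F : UCE φ SK → UCE φ SL) : Prop :=
  IsHLRHom UK UL F ∧
  ∀ (a : A) (x y : K), F (uceMk φ SK a x y) = uceMk φ SL a (f x) (f y)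

/-- `D` is an `α`-derivation of `(L, α_L)` with symbol `σD`. -/
def IsAlphaDeriv {L : Type}
    [AddCommGroup L] [Module R L] [Module A L] [IsScalarTower R A L]
    (S : HLR R A φ L) (D : L → L) (σD : A → A) : Prop :=
  (∀ x y, D (x + y) = D x + D y) ∧
  (∀ (r : R) (x : L), D (r • x) = r • D x) ∧
  (∀ a b, σD (a + b) = σD a + σD b) ∧
  (∀ (r : R) (a : A), σD (r • a) = r • σD a) ∧
  (∀ a b, σD (a * b) = φ a * σD b + φ b * σD a) ∧
  (∀ x, D (S.alpha x) = S.alpha (D x)) ∧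
  (∀ x y, D (S.bracket x y) = S.bracket (D x) (S.alpha y) + S.bracket (S.alpha x) (D y)) ∧
  (∀ a, σD (φ a) = φ (σD a)) ∧
  (∀ (a : A) (x : L), D (a • x) = φ a • D x + σD a • S.alpha x) ∧
  (∀ (x : L) (a : A), σD (S.rho x a) = S.rho (S.alpha x) (σD a) + S.rho (D x) (φ a))

/-- A quasi hom-action of `(L, α_L)` on `(M, α_M)`. -/
def IsQuasiHomAction {L M : Type}
    [AddCommGroup L] [Module R L] [Module A L] [IsScalarTower R A L]
    [AddCommGroup M] [Module R M] [Module A M] [IsScalarTower R A M]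
    (SL : HLR R A φ L) (SM : HLR R A φ M) (act : L → M → M) : Prop :=
  (∀ (x : L) (a : A) (m : M),
      act x (a • m) = φ a • act x m + SL.rho x a • SM.alpha m) ∧
  (∀ (x y : L) (m : M),
      act (SL.bracket x y) (SM.alpha m)
        = act (SL.alpha x) (act y m) - act (SL.alpha y) (act x m)) ∧
  (∀ (x : L) (m n : M),
      act (SL.alpha x) (SM.bracket m n)
        = SM.bracket (act x m) (SM.alpha n) + SM.bracket (SM.alpha m) (act x n)) ∧
  (∀ (x : L) (m : M) (a : A),
      SM.rho (act x m) (φ a)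
        = SL.rho (SL.alpha x) (SM.rho m a) - SM.rho (SM.alpha m) (SL.rho x a)) ∧
  (∀ (x : L) (m : M), SM.alpha (act x m) = act (SL.alpha x) (SM.alpha m))

/-- Compatibility of two quasi hom-actions on each other. -/
def AreCompatibleActions {L M : Type}
    [AddCommGroup L] [Module R L] [Module A L] [IsScalarTower R A L]
    [AddCommGroup M] [Module R M] [Module A M] [IsScalarTower R A M]
    (SL : HLR R A φ L) (SM : HLR R A φ M)
    (actLM : L → M → M) (actML : M → L → L) : Prop :=
  (∀ (x : L) (m : M) (a : A), SM.rho (actLM x m) a = - SL.rho (actML m x) a) ∧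
  (∀ (m : M) (x : L) (n : M), actLM (actML m x) n = SM.bracket n (actLM x m)) ∧
  (∀ (x : L) (m : M) (y : L), actML (actLM x m) y = SL.bracket y (actML m x))

end MoreDefs

section StarDefs

variable {R A : Type} [CommRing R] [CommRing A] [Algebra R A] (φ : A →ₐ[R] A)
variable {L M : Type}
  [AddCommGroup L] [Module R L] [Module A L] [IsScalarTower R A L]
  [AddCommGroup M] [Module R M] [Module A M] [IsScalarTower R A M]

/-- The `A`-submodule of defining relations of the non-abelian tensor product `L ∗ M`,
inside the free `A`-module on the symbols `x ∗ m`. -/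
noncomputable def starRel (SL : HLR R A φ L) (SM : HLR R A φ M)
    (actLM : L → M → M) (actML : M → L → L) : Submodule A ((L × M) →₀ A) :=
  Submodule.span A
    ({t | ∃ (x y : L) (m : M), t =
        Finsupp.single (x + y, m) (1 : A) - Finsupp.single (x, m) 1
          - Finsupp.single (y, m) 1} ∪
     {t | ∃ (r : R) (x : L) (m : M), t =
        Finsupp.single (r • x, m) (1 : A) - r • Finsupp.single (x, m) (1 : A)} ∪
     {t | ∃ (x : L) (m n : M), t =
        Finsupp.single (x, m + n) (1 : A) - Finsupp.single (x, m) 1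
          - Finsupp.single (x, n) 1} ∪
     {t | ∃ (r : R) (x : L) (m : M), t =
        Finsupp.single (x, r • m) (1 : A) - r • Finsupp.single (x, m) (1 : A)} ∪
     {t | ∃ (x y : L) (m : M), t =
        Finsupp.single (SL.bracket x y, SM.alpha m) (1 : A)
          - Finsupp.single (SL.alpha x, actLM y m) 1
          + Finsupp.single (SL.alpha y, actLM x m) 1} ∪
     {t | ∃ (x : L) (m n : M), t =
        Finsupp.single (SL.alpha x, SM.bracket m n) (1 : A)
          - Finsupp.single (actML n x, SM.alpha m) 1
          + Finsupp.single (actML m x, SM.alpha n) 1} ∪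
     {t | ∃ (a b : A) (x y : L) (m n : M), t =
        Finsupp.single (a • actML m x, b • actLM y n) (1 : A)
          + Finsupp.single (b • actML n y, a • actLM x m) 1} ∪
     {t | ∃ (a b : A) (x y : L) (m n : M), t =
        Finsupp.single (a • actML m x, b • actLM y n) (1 : A)
          - φ (a * b) • Finsupp.single (actML m x, actLM y n) (1 : A)
          + (φ a * SM.rho (actLM x m) b) • Finsupp.single (SL.alpha y, SM.alpha n) (1 : A)
          - (φ b * SM.rho (actLM y n) a) • Finsupp.single (SL.alpha x, SM.alpha m) (1 : A)})

/-- The underlying `A`-module of the non-abelian tensor product `L ∗ M`. -/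
abbrev StarMod (SL : HLR R A φ L) (SM : HLR R A φ M)
    (actLM : L → M → M) (actML : M → L → L) : Type :=
  ((L × M) →₀ A) ⧸ starRel φ SL SM actLM actML

/-- The generator `x ∗ m` of `L ∗ M`. -/
noncomputable def starMk (SL : HLR R A φ L) (SM : HLR R A φ M)
    (actLM : L → M → M) (actML : M → L → L) (x : L) (m : M) :
    StarMod φ SL SM actLM actML :=
  Submodule.Quotient.mk (Finsupp.single (x, m) (1 : A))

/-- `U` is the hom-Lie-Rinehart structure of the non-abelian tensor product `L ∗ M`. -/
def IsStarStructure (SL : HLR R A φ L) (SM : HLR R A φ M)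
    (actLM : L → M → M) (actML : M → L → L)
    (U : HLR R A φ (StarMod φ SL SM actLM actML)) : Prop :=
  (∀ (x : L) (m : M),
      U.alpha (starMk φ SL SM actLM actML x m)
        = starMk φ SL SM actLM actML (SL.alpha x) (SM.alpha m)) ∧
  (∀ (a b : A) (x y : L) (m n : M),
      U.bracket (a • starMk φ SL SM actLM actML x m)
          (b • starMk φ SL SM actLM actML y n)
        = - starMk φ SL SM actLM actML (a • actML m x) (b • actLM y n)) ∧
  (∀ (x : L) (m : M) (a : A),
      U.rho (starMk φ SL SM actLM actML x m) a = SM.rho (actLM x m) a)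

/-- A hom-Lie-Rinehart pairing of `(L, α_L)` and `(M, α_M)` into `(N, α_N)`. -/
def IsHLRPairing {N : Type}
    [AddCommGroup N] [Module R N] [Module A N] [IsScalarTower R A N]
    (SL : HLR R A φ L) (SM : HLR R A φ M) (SN : HLR R A φ N)
    (actLM : L → M → M) (actML : M → L → L) (f : L → M → N) : Prop :=
  (∀ (x y : L) (m : M), f (x + y) m = f x m + f y m) ∧
  (∀ (r : R) (x : L) (m : M), f (r • x) m = r • f x m) ∧
  (∀ (x : L) (m n : M), f x (m + n) = f x m + f x n) ∧
  (∀ (r : R) (x : L) (m : M), f x (r • m) = r • f x m) ∧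
  (∀ (x : L) (m : M) (a : A), SN.rho (f x m) a = SM.rho (actLM x m) a) ∧
  (∀ (x y : L) (m : M),
      f (SL.bracket x y) (SM.alpha m)
        = f (SL.alpha x) (actLM y m) - f (SL.alpha y) (actLM x m)) ∧
  (∀ (x : L) (m n : M),
      f (SL.alpha x) (SM.bracket m n)
        = f (actML n x) (SM.alpha m) - f (actML m x) (SM.alpha n)) ∧
  (∀ (x : L) (m : M), f (SL.alpha x) (SM.alpha m) = SN.alpha (f x m)) ∧
  (∀ (a b : A) (x y : L) (m n : M),
      f (a • actML m x) (b • actLM y n)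
        = - (φ (a * b) • SN.bracket (f x m) (f y n))
          - (φ a * SN.rho (f x m) b) • SN.alpha (f y n)
          + (φ b * SN.rho (f y n) a) • SN.alpha (f x m))

end StarDefs

/-!
Modulo the image of `L₁ ∗ M`, the class of `s ∗ m` in `L₂ ∗ M` depends only on `g s`, since
`s ∗ m` is additive in `s` and `ker g = im f`. Hence, for any set-theoretic section `σ` of `g`,
`t ∗ m ↦ [σ t ∗ m]` is well defined on `L₃ ∗ M`: every defining relation of `L₃ ∗ M` is the image
of one of `L₂ ∗ M` under the surjection `g`. This map is a left inverse of `g ∗ Id_M` modulo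
`im (f ∗ Id_M)`, so `ker (g ∗ Id_M) ⊆ im (f ∗ Id_M)`; the reverse inclusion and the surjectivity of
`g ∗ Id_M` are checked on the generators `x ∗ m`.
-/

namespace IsHLRHom

variable {R A : Type} [CommRing R] [CommRing A] [Algebra R A] {φ : A →ₐ[R] A}
variable {K L : Type}
  [AddCommGroup K] [Module R K] [Module A K] [IsScalarTower R A K]
  [AddCommGroup L] [Module R L] [Module A L] [IsScalarTower R A L]
  {SK : HLR R A φ K} {SL : HLR R A φ L} {f : K → L}

def toLinearMap (hf : IsHLRHom SK SL f) : K →ₗ[A] L where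
  toFun := f
  map_add' := hf.1
  map_smul' := hf.2.1

@[simp]
theorem coe_toLinearMap (hf : IsHLRHom SK SL f) : ⇑hf.toLinearMap = f := rfl

end IsHLRHom

section StarMk

variable {R A : Type} [CommRing R] [CommRing A] [Algebra R A] (φ : A →ₐ[R] A)
variable {L M : Type}
  [AddCommGroup L] [Module R L] [Module A L] [IsScalarTower R A L]
  [AddCommGroup M] [Module R M] [Module A M] [IsScalarTower R A M]
  (SL : HLR R A φ L) (SM : HLR R A φ M) (act : L → M → M) (coact : M → L → L)

theorem mk_single_eq_smul_starMk (x : L) (m : M) (a : A) :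
    (Submodule.Quotient.mk (Finsupp.single (x, m) a) : StarMod φ SL SM act coact)
      = a • starMk φ SL SM act coact x m := by
  rw [starMk, ← Submodule.Quotient.mk_smul, Finsupp.smul_single', mul_one]

theorem span_range_starMk :
    Submodule.span A (Set.range fun p : L × M => starMk φ SL SM act coact p.1 p.2) = ⊤ := by
  have h := congrArg (Submodule.map (starRel φ SL SM act coact).mkQ)
    (Finsupp.basisSingleOne (R := A) (ι := L × M)).span_eq
  rwa [Submodule.map_span, ← Set.range_comp, Submodule.map_top, Submodule.range_mkQ] at h

theorem starMk_add_left (x y : L) (m : M) :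
    starMk φ SL SM act coact (x + y) m
      = starMk φ SL SM act coact x m + starMk φ SL SM act coact y m := by
  rw [← sub_eq_zero, ← sub_sub, starMk, starMk, starMk, ← Submodule.Quotient.mk_sub,
    ← Submodule.Quotient.mk_sub, Submodule.Quotient.mk_eq_zero]
  refine Submodule.subset_span ?_
  simp only [Set.mem_union, Set.mem_ofPred_eq]
  exact Or.inl (Or.inl (Or.inl (Or.inl (Or.inl (Or.inl (Or.inl ⟨x, y, m, rfl⟩))))))

theorem starMk_zero_left (m : M) : starMk φ SL SM act coact 0 m = 0 := by
  simpa using starMk_add_left φ SL SM act coact 0 0 m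

theorem starMk_sub_left (x y : L) (m : M) :
    starMk φ SL SM act coact (x - y) m
      = starMk φ SL SM act coact x m - starMk φ SL SM act coact y m := by
  rw [eq_sub_iff_add_eq, ← starMk_add_left, sub_add_cancel]

end StarMk

section Functoriality

variable {R A : Type} [CommRing R] [CommRing A] [Algebra R A] {φ : A →ₐ[R] A}
variable {L L' M : Type}
  [AddCommGroup L] [Module R L] [Module A L] [IsScalarTower R A L]
  [AddCommGroup L'] [Module R L'] [Module A L'] [IsScalarTower R A L']
  [AddCommGroup M] [Module R M] [Module A M] [IsScalarTower R A M]
  {S : HLR R A φ L} {S' : HLR R A φ L'} {SM : HLR R A φ M}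
  {act : L → M → M} {coact : M → L → L} {act' : L' → M → M} {coact' : M → L' → L'}
  {g : L → L'}

theorem starRel_le_map_lmapDomain (hg : IsHLRHom S S' g) (hsurj : Surjective g)
    (hcoact : ∀ (p : M) (s : L), g (coact p s) = coact' p (g s))
    (hact : ∀ (s : L) (p : M), act s p = act' (g s) p) :
    starRel φ S' SM act' coact' ≤
      (starRel φ S SM act coact).map (Finsupp.lmapDomain A A (Prod.map g id)) := by
  have hsmulR (r : R) (x : L) : g (r • x) = r • g x := hg.toLinearMap.map_smul_of_tower r x
  rw [starRel, starRel, Submodule.map_span]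
  simp only [Set.image_union]
  gcongr
  · rintro _ ⟨x, y, m, rfl⟩
    obtain ⟨x, rfl⟩ := hsurj x
    obtain ⟨y, rfl⟩ := hsurj y
    refine ⟨_, ⟨x, y, m, rfl⟩, ?_⟩
    simp only [map_sub, Finsupp.lmapDomain_apply, Finsupp.mapDomain_single, Prod.map_apply, id_eq,
      hg.1]
  · rintro _ ⟨r, x, m, rfl⟩
    obtain ⟨x, rfl⟩ := hsurj x
    refine ⟨_, ⟨r, x, m, rfl⟩, ?_⟩
    simp only [map_sub, LinearMap.map_smul_of_tower, Finsupp.lmapDomain_apply,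
      Finsupp.mapDomain_single, Prod.map_apply, id_eq, hsmulR]
  · rintro _ ⟨x, m, n, rfl⟩
    obtain ⟨x, rfl⟩ := hsurj x
    refine ⟨_, ⟨x, m, n, rfl⟩, ?_⟩
    simp only [map_sub, Finsupp.lmapDomain_apply, Finsupp.mapDomain_single, Prod.map_apply, id_eq]
  · rintro _ ⟨r, x, m, rfl⟩
    obtain ⟨x, rfl⟩ := hsurj x
    refine ⟨_, ⟨r, x, m, rfl⟩, ?_⟩
    simp only [map_sub, LinearMap.map_smul_of_tower, Finsupp.lmapDomain_apply,
      Finsupp.mapDomain_single, Prod.map_apply, id_eq]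
  · rintro _ ⟨x, y, m, rfl⟩
    obtain ⟨x, rfl⟩ := hsurj x
    obtain ⟨y, rfl⟩ := hsurj y
    refine ⟨_, ⟨x, y, m, rfl⟩, ?_⟩
    simp only [map_add, map_sub, Finsupp.lmapDomain_apply, Finsupp.mapDomain_single, Prod.map_apply,
      id_eq, hg.2.2.1, hg.2.2.2.1, hact]
  · rintro _ ⟨x, m, n, rfl⟩
    obtain ⟨x, rfl⟩ := hsurj x
    refine ⟨_, ⟨x, m, n, rfl⟩, ?_⟩
    simp only [map_add, map_sub, Finsupp.lmapDomain_apply, Finsupp.mapDomain_single, Prod.map_apply,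
      id_eq, hg.2.2.2.1, hcoact]
  · rintro _ ⟨a, b, x, y, m, n, rfl⟩
    obtain ⟨x, rfl⟩ := hsurj x
    obtain ⟨y, rfl⟩ := hsurj y
    refine ⟨_, ⟨a, b, x, y, m, n, rfl⟩, ?_⟩
    simp only [map_add, Finsupp.lmapDomain_apply, Finsupp.mapDomain_single, Prod.map_apply, id_eq,
      hg.2.1, hcoact, hact]
  · rintro _ ⟨a, b, x, y, m, n, rfl⟩
    obtain ⟨x, rfl⟩ := hsurj x
    obtain ⟨y, rfl⟩ := hsurj y
    refine ⟨_, ⟨a, b, x, y, m, n, rfl⟩, ?_⟩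
    simp only [map_add, map_sub, map_smul, Finsupp.lmapDomain_apply, Finsupp.mapDomain_single,
      Prod.map_apply, id_eq, hg.2.1, hg.2.2.2.1, hcoact, hact]

theorem mkQ_starMk_eq_of_map_eq (hg : IsHLRHom S S' g) {N : Submodule A (StarMod φ S SM act coact)}
    (hN : ∀ x m, g x = 0 → starMk φ S SM act coact x m ∈ N) {x y : L} (hxy : g x = g y)
    (m : M) : N.mkQ (starMk φ S SM act coact x m) = N.mkQ (starMk φ S SM act coact y m) := by
  rw [← sub_eq_zero, ← map_sub, ← starMk_sub_left, Submodule.mkQ_apply,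
    Submodule.Quotient.mk_eq_zero]
  exact hN _ _ ((hg.toLinearMap.map_sub x y).trans (sub_eq_zero.2 hxy))

theorem ker_le_of_starMk_mem (hg : IsHLRHom S S' g) (hsurj : Surjective g)
    (hcoact : ∀ (p : M) (s : L), g (coact p s) = coact' p (g s))
    (hact : ∀ (s : L) (p : M), act s p = act' (g s) p)
    {N : Submodule A (StarMod φ S SM act coact)}
    (hN : ∀ x m, g x = 0 → starMk φ S SM act coact x m ∈ N)
    (G : StarMod φ S SM act coact →ₗ[A] StarMod φ S' SM act' coact')
    (hG : ∀ x m, G (starMk φ S SM act coact x m) = starMk φ S' SM act' coact' (g x) m) :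
    LinearMap.ker G ≤ N := by
  let Ψ : ((L' × M) →₀ A) →ₗ[A] StarMod φ S SM act coact ⧸ N :=
    Finsupp.linearCombination A fun p => N.mkQ (starMk φ S SM act coact (surjInv hsurj p.1) p.2)
  have hΨ : Ψ ∘ₗ Finsupp.lmapDomain A A (Prod.map g id)
      = N.mkQ ∘ₗ (starRel φ S SM act coact).mkQ := by
    refine Finsupp.lhom_ext fun ⟨x, m⟩ a => ?_
    simp only [Ψ, LinearMap.comp_apply, Finsupp.lmapDomain_apply, Finsupp.mapDomain_single,
      Finsupp.linearCombination_single, Prod.map_apply, id_eq, Submodule.mkQ_apply,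
      mk_single_eq_smul_starMk, Submodule.Quotient.mk_smul]
    exact congrArg (a • ·) (mkQ_starMk_eq_of_map_eq hg hN (surjInv_eq hsurj (g x)) m)
  have hrel : starRel φ S' SM act' coact' ≤ LinearMap.ker Ψ := by
    refine (starRel_le_map_lmapDomain hg hsurj hcoact hact).trans
      (Submodule.map_le_iff_le_comap.2 fun c hc => ?_)
    rw [Submodule.mem_comap, LinearMap.mem_ker, ← LinearMap.comp_apply, hΨ, LinearMap.comp_apply,
      Submodule.mkQ_apply, Submodule.mkQ_apply, (Submodule.Quotient.mk_eq_zero _).2 hc,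
      Submodule.Quotient.mk_zero]
  let ψ := (starRel φ S' SM act' coact').liftQ Ψ hrel
  have hψG : ψ ∘ₗ G = N.mkQ := by
    refine LinearMap.ext_on_range (span_range_starMk φ S SM act coact) fun p => ?_
    rw [LinearMap.comp_apply, hG, starMk, Submodule.liftQ_apply]
    simp only [Ψ, Finsupp.linearCombination_single, one_smul]
    exact mkQ_starMk_eq_of_map_eq hg hN (surjInv_eq hsurj _) _
  refine fun ξ hξ => ?_
  rw [← Submodule.Quotient.mk_eq_zero, ← Submodule.mkQ_apply, ← hψG, LinearMap.comp_apply,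
    LinearMap.mem_ker.1 hξ, map_zero]

theorem surjective_of_map_starMk (hsurj : Surjective g)
    (G : StarMod φ S SM act coact →ₗ[A] StarMod φ S' SM act' coact')
    (hG : ∀ x m, G (starMk φ S SM act coact x m) = starMk φ S' SM act' coact' (g x) m) :
    Surjective G := by
  rw [← LinearMap.range_eq_top, eq_top_iff, ← span_range_starMk, Submodule.span_le]
  rintro _ ⟨⟨t, m⟩, rfl⟩
  obtain ⟨x, rfl⟩ := hsurj t
  exact ⟨_, hG x m⟩

end Functoriality

theorem statement_19_general
    {R A : Type} [CommRing R] [CommRing A] [Algebra R A] (φ : A →ₐ[R] A)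
    {L₁ L₂ L₃ M : Type}
    [AddCommGroup L₁] [Module R L₁] [Module A L₁] [IsScalarTower R A L₁]
    [AddCommGroup L₂] [Module R L₂] [Module A L₂] [IsScalarTower R A L₂]
    [AddCommGroup L₃] [Module R L₃] [Module A L₃] [IsScalarTower R A L₃]
    [AddCommGroup M] [Module R M] [Module A M] [IsScalarTower R A M]
    (S₁ : HLR R A φ L₁) (S₂ : HLR R A φ L₂) (S₃ : HLR R A φ L₃) (SM : HLR R A φ M)
    (f : L₁ → L₂) (g : L₂ → L₃)
    (hg : IsHLRHom S₂ S₃ g)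
    (hsurj : Function.Surjective g)
    (hexact : Set.range f = {x | g x = 0})
    (act₁ : L₁ → M → M) (coact₁ : M → L₁ → L₁)
    (act₂ : L₂ → M → M) (coact₂ : M → L₂ → L₂)
    (act₃ : L₃ → M → M) (coact₃ : M → L₃ → L₃)
    (hpres₃ : ∀ (p : M) (s : L₂), g (coact₂ p s) = coact₃ p (g s))
    (hpres₄ : ∀ (s : L₂) (p : M), act₂ s p = act₃ (g s) p)
    (U₁ : HLR R A φ (StarMod φ S₁ SM act₁ coact₁))
    (U₂ : HLR R A φ (StarMod φ S₂ SM act₂ coact₂))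
    (U₃ : HLR R A φ (StarMod φ S₃ SM act₃ coact₃))
    (F : StarMod φ S₁ SM act₁ coact₁ → StarMod φ S₂ SM act₂ coact₂)
    (hFhom : IsHLRHom U₁ U₂ F)
    (hFform : ∀ (x : L₁) (m : M),
      F (starMk φ S₁ SM act₁ coact₁ x m) = starMk φ S₂ SM act₂ coact₂ (f x) m)
    (G : StarMod φ S₂ SM act₂ coact₂ → StarMod φ S₃ SM act₃ coact₃)
    (hGhom : IsHLRHom U₂ U₃ G)
    (hGform : ∀ (s : L₂) (m : M),
      G (starMk φ S₂ SM act₂ coact₂ s m) = starMk φ S₃ SM act₃ coact₃ (g s) m) :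
    Function.Surjective G ∧ Set.range F = {ξ | G ξ = 0} := by
  have hgf (x : L₁) : g (f x) = 0 := (hexact ▸ mem_range_self x : f x ∈ {x | g x = 0})
  have hGF : hGhom.toLinearMap ∘ₗ hFhom.toLinearMap = 0 := by
    refine LinearMap.ext_on_range (span_range_starMk φ S₁ SM act₁ coact₁) fun p => ?_
    simp only [LinearMap.comp_apply, IsHLRHom.coe_toLinearMap, hFform, hGform, hgf,
      starMk_zero_left, LinearMap.zero_apply]
  have hN (s : L₂) (m : M) (hs : g s = 0) : starMk φ S₂ SM act₂ coact₂ s m ∈ range F := by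
    obtain ⟨x, rfl⟩ : s ∈ range f := hexact ▸ hs
    exact ⟨_, hFform x m⟩
  refine ⟨surjective_of_map_starMk hsurj hGhom.toLinearMap hGform, Subset.antisymm ?_ ?_⟩
  · rintro _ ⟨ξ, rfl⟩
    exact LinearMap.congr_fun hGF ξ
  · exact ker_le_of_starMk_mem (N := LinearMap.range hFhom.toLinearMap) hg hsurj hpres₃ hpres₄ hN
      hGhom.toLinearMap hGform

/-- right-exactness of the non-abelian tensor product: a short exact sequence
`L₁ → L₂ → L₃` with action-preserving maps induces an exact sequence
`L₁ ∗ M → L₂ ∗ M → L₃ ∗ M` with surjective second map. -/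
theorem statement_19
    {R A : Type} [CommRing R] [CommRing A] [Algebra R A] (φ : A →ₐ[R] A)
    {L₁ L₂ L₃ M : Type}
    [AddCommGroup L₁] [Module R L₁] [Module A L₁] [IsScalarTower R A L₁]
    [AddCommGroup L₂] [Module R L₂] [Module A L₂] [IsScalarTower R A L₂]
    [AddCommGroup L₃] [Module R L₃] [Module A L₃] [IsScalarTower R A L₃]
    [AddCommGroup M] [Module R M] [Module A M] [IsScalarTower R A M]
    (S₁ : HLR R A φ L₁) (S₂ : HLR R A φ L₂) (S₃ : HLR R A φ L₃) (SM : HLR R A φ M)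
    (f : L₁ → L₂) (g : L₂ → L₃)
    (hf : IsHLRHom S₁ S₂ f) (hg : IsHLRHom S₂ S₃ g)
    (hinj : Function.Injective f) (hsurj : Function.Surjective g)
    (hexact : Set.range f = {x | g x = 0})
    (act₁ : L₁ → M → M) (coact₁ : M → L₁ → L₁)
    (act₂ : L₂ → M → M) (coact₂ : M → L₂ → L₂)
    (act₃ : L₃ → M → M) (coact₃ : M → L₃ → L₃)
    (hq₁ : IsQuasiHomAction φ S₁ SM act₁) (hq₁' : IsQuasiHomAction φ SM S₁ coact₁)
    (hc₁ : AreCompatibleActions φ S₁ SM act₁ coact₁)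
    (hq₂ : IsQuasiHomAction φ S₂ SM act₂) (hq₂' : IsQuasiHomAction φ SM S₂ coact₂)
    (hc₂ : AreCompatibleActions φ S₂ SM act₂ coact₂)
    (hq₃ : IsQuasiHomAction φ S₃ SM act₃) (hq₃' : IsQuasiHomAction φ SM S₃ coact₃)
    (hc₃ : AreCompatibleActions φ S₃ SM act₃ coact₃)
    (hpres₁ : ∀ (p : M) (x : L₁), f (coact₁ p x) = coact₂ p (f x))
    (hpres₂ : ∀ (x : L₁) (p : M), act₁ x p = act₂ (f x) p)
    (hpres₃ : ∀ (p : M) (s : L₂), g (coact₂ p s) = coact₃ p (g s))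
    (hpres₄ : ∀ (s : L₂) (p : M), act₂ s p = act₃ (g s) p)
    (U₁ : HLR R A φ (StarMod φ S₁ SM act₁ coact₁))
    (hU₁ : IsStarStructure φ S₁ SM act₁ coact₁ U₁)
    (U₂ : HLR R A φ (StarMod φ S₂ SM act₂ coact₂))
    (hU₂ : IsStarStructure φ S₂ SM act₂ coact₂ U₂)
    (U₃ : HLR R A φ (StarMod φ S₃ SM act₃ coact₃))
    (hU₃ : IsStarStructure φ S₃ SM act₃ coact₃ U₃)
    (F : StarMod φ S₁ SM act₁ coact₁ → StarMod φ S₂ SM act₂ coact₂)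
    (hFhom : IsHLRHom U₁ U₂ F)
    (hFform : ∀ (x : L₁) (m : M),
      F (starMk φ S₁ SM act₁ coact₁ x m) = starMk φ S₂ SM act₂ coact₂ (f x) m)
    (G : StarMod φ S₂ SM act₂ coact₂ → StarMod φ S₃ SM act₃ coact₃)
    (hGhom : IsHLRHom U₂ U₃ G)
    (hGform : ∀ (s : L₂) (m : M),
      G (starMk φ S₂ SM act₂ coact₂ s m) = starMk φ S₃ SM act₃ coact₃ (g s) m) :
    Function.Surjective G ∧ Set.range F = {ξ | G ξ = 0} :=
  statement_19_general φ S₁ S₂ S₃ SM f g hg hsurj hexact act₁ coact₁ act₂ coact₂ act₃ coact₃ hpres₃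
    hpres₄ U₁ U₂ U₃ F hFhom hFform G hGhom hGform
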